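/- Substituting distinct fresh names commutes with normalisation: if M is a microCCS term with variables among {Xᵢ}ᵢ∈I and {aᵢ}ᵢ∈I are pairwise distinct names not occurring in M, then ⌊M{aᵢ.0/Xᵢ}⌋ ≡ ⌊M⌋{aᵢ.0/Xᵢ}. -/

import Mathlib

/-- CCS visible actions: a name `a` or a coname `ā`. -/
inductive Act where
  | inp : ℕ → Act
  | out : ℕ → Act
deriving DecidableEq

/-- The coaction. -/
def Act.co : Act → Act
  | .inp a => .out a
  | .out a => .inp a

/-- MicroCCS processes: nil, prefix, parallel composition. -/
inductive Proc where
  | nil : Proc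
  | pre : Act → Proc → Proc
  | par : Proc → Proc → Proc
deriving DecidableEq

/-- Transition labels: a visible action or τ. -/
inductive Lab where
  | act : Act → Lab
  | tau : Lab
deriving DecidableEq

/-- The standard CCS labelled transition system on microCCS. -/
inductive Step : Proc → Lab → Proc → Prop where
  | pre (η : Act) (P : Proc) : Step (.pre η P) (.act η) P
  | syn {P P' Q Q' : Proc} {η : Act} :
      Step P (.act η) P' → Step Q (.act η.co) Q' →
      Step (.par P Q) .tau (.par P' Q')
  | parL {P P' : Proc} {μ : Lab} (Q : Proc) :
      Step P μ P' → Step (.par P Q) μ (.par P' Q)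
  | parR {Q Q' : Proc} {μ : Lab} (P : Proc) :
      Step Q μ Q' → Step (.par P Q) μ (.par P Q')

/-- A (symmetric) bisimulation. -/
def IsBisim (R : Proc → Proc → Prop) : Prop :=
  (∀ P Q, R P Q → R Q P) ∧
  ∀ P Q μ P', R P Q → Step P μ P' → ∃ Q', Step Q μ Q' ∧ R P' Q'

/-- Strong bisimilarity: the union of all bisimulations. -/
def Bisim (P Q : Proc) : Prop := ∃ R, IsBisim R ∧ R P Q

/-- The size of a process: its number of prefixes. -/
def Proc.size : Proc → ℕ
  | .nil => 0
  | .pre _ P => 1 + P.size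
  | .par P Q => P.size + Q.size

/-- Structural congruence: abelian monoid laws for parallel composition. -/
inductive SC : Proc → Proc → Prop where
  | refl (P) : SC P P
  | symm : SC P Q → SC Q P
  | trans : SC P Q → SC Q R → SC P R
  | comm (P Q) : SC (.par P Q) (.par Q P)
  | assoc (P Q R) : SC (.par P (.par Q R)) (.par (.par P Q) R)
  | unit (P) : SC (.par P .nil) P
  | pre (η) : SC P Q → SC (.pre η P) (.pre η Q)
  | par : SC P P' → SC Q Q' → SC (.par P Q) (.par P' Q')

/-- `pow P k` is the k-fold parallel composition of `P`. -/
def pow (P : Proc) : ℕ → Proc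
  | 0 => .nil
  | n+1 => .par P (pow P n)

/-- One step of rewriting with the distribution law
    `η.(P ‖ (η.P)^k) ⇝ (η.P)^{k+1}` (k ≥ 1), modulo structural
    congruence, in any context. -/
inductive RW : Proc → Proc → Prop where
  | head {η : Act} {P : Proc} {k : ℕ} (hk : 1 ≤ k) :
      RW (.pre η (.par P (pow (.pre η P) k))) (pow (.pre η P) (k+1))
  | pre (η) : RW P P' → RW (.pre η P) (.pre η P')
  | parL (Q) : RW P P' → RW (.par P Q) (.par P' Q)
  | parR (P) : RW Q Q' → RW (.par P Q) (.par P Q')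
  | congr : SC P P₁ → RW P₁ P₂ → SC P₂ P' → RW P P'

/-- Reflexive-transitive closure of the distribution rewriting. -/
def Rws : Proc → Proc → Prop := Relation.ReflTransGen RW

/-- Normal forms for the distribution rewriting. -/
def NF (P : Proc) : Prop := ¬ ∃ P', RW P P'

/-- Prime processes. -/
def IsPrime (P : Proc) : Prop :=
  ¬ Bisim P .nil ∧ ∀ Q R, Bisim P (.par Q R) → Bisim Q .nil ∨ Bisim R .nil

/-- MicroCCS terms with variables. -/
inductive Tm where
  | nil : Tm
  | pre : Act → Tm → Tm
  | par : Tm → Tm → Tm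
  | var : ℕ → Tm
deriving DecidableEq

/-- Instantiation of a term by a ground instantiation (mapping variables
    to processes). -/
def inst (σ : ℕ → Proc) : Tm → Proc
  | .nil => .nil
  | .pre η M => .pre η (inst σ M)
  | .par M N => .par (inst σ M) (inst σ N)
  | .var x => σ x

/-- The variables occurring in a term. -/
def tmVars : Tm → Set ℕ
  | .nil => ∅
  | .pre _ M => tmVars M
  | .par M N => tmVars M ∪ tmVars N
  | .var x => {x}

/-- The underlying name of an action. -/
def Act.name : Act → ℕ
  | .inp a => a
  | .out a => a

/-- The names occurring in a term. -/
def tmNames : Tm → Set ℕ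
  | .nil => ∅
  | .pre η M => {η.name} ∪ tmNames M
  | .par M N => tmNames M ∪ tmNames N
  | .var _ => ∅

/-- k-fold parallel composition of a term. -/
def tpow (M : Tm) : ℕ → Tm
  | 0 => .nil
  | n+1 => .par M (tpow M n)

/-- Structural congruence on terms. -/
inductive TmSC : Tm → Tm → Prop where
  | refl (M) : TmSC M M
  | symm : TmSC M N → TmSC N M
  | trans : TmSC M N → TmSC N K → TmSC M K
  | comm (M N) : TmSC (.par M N) (.par N M)
  | assoc (M N K) : TmSC (.par M (.par N K)) (.par (.par M N) K)
  | unit (M) : TmSC (.par M .nil) M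
  | pre (η) : TmSC M N → TmSC (.pre η M) (.pre η N)
  | par : TmSC M M' → TmSC N N' → TmSC (.par M N) (.par M' N')

/-- Distribution-law rewriting on terms, modulo structural congruence. -/
inductive TmRW : Tm → Tm → Prop where
  | head {η : Act} {M : Tm} {k : ℕ} (hk : 1 ≤ k) :
      TmRW (.pre η (.par M (tpow (.pre η M) k))) (tpow (.pre η M) (k+1))
  | pre (η) : TmRW M M' → TmRW (.pre η M) (.pre η M')
  | parL (N) : TmRW M M' → TmRW (.par M N) (.par M' N)
  | parR (M) : TmRW N N' → TmRW (.par M N) (.par M N')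
  | congr : TmSC M M₁ → TmRW M₁ M₂ → TmSC M₂ M' → TmRW M M'

def TmRws : Tm → Tm → Prop := Relation.ReflTransGen TmRW

def TmNF (M : Tm) : Prop := ¬ ∃ M', TmRW M M'

/-! Distribution-law rewriting terminates, since it lowers the total size of the bodies of all
prefixes, and it is locally confluent up to `≡`: a process is, up to `≡`, a multiset of prefixed
components, and two steps either act on different components, and commute, or overlap inside a
single one. By Newman's lemma, normal forms are therefore unique up to `≡`.

Instantiating `M ⇝* ⌊M⌋` gives `M{aᵢ.0/Xᵢ} ⇝* ⌊M⌋{aᵢ.0/Xᵢ}`, so it is enough to show that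
`⌊M⌋{aᵢ.0/Xᵢ}` is normal. The names `aᵢ` are distinct and fresh, so each leaf `aᵢ.0` can be read
back as `Xᵢ`. Since such a leaf lies in no redex, reading back turns a step of
`⌊M⌋{aᵢ.0/Xᵢ}` into a step of `⌊M⌋`, and `⌊M⌋` has none. -/

open Relation

infix:50 " ≡ₛ " => SC

instance : Trans SC SC SC := ⟨SC.trans⟩

section Newman

variable {α : Type*} {r e : α → α → Prop}

theorem exists_normal_of_wellFounded (hwf : WellFounded (flip r)) (a : α) :
    ∃ n, ReflTransGen r a n ∧ ∀ x, ¬ r n x := by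
  induction a using hwf.induction with
  | _ a ih =>
  by_cases h : ∃ b, r a b
  · obtain ⟨b, hab⟩ := h
    obtain ⟨n, hbn, hn⟩ := ih b hab
    exact ⟨n, .head hab hbn, hn⟩
  · exact ⟨a, .refl, fun x hx => h ⟨x, hx⟩⟩

theorem Relation.ReflTransGen.exists_of_equiv {a b c : α} (hbc : ReflTransGen r b c)
    (he : Equivalence e) (hcompat : ∀ a b c, e a b → r b c → r a c) (hab : e a b) :
    ∃ c', ReflTransGen r a c' ∧ e c' c := by
  rcases hbc.cases_head with rfl | ⟨d, hbd, hdc⟩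
  · exact ⟨a, .refl, hab⟩
  · exact ⟨c, .head (hcompat _ _ _ hab hbd) hdc, he.refl c⟩

/-- Newman's lemma modulo an equivalence `e` absorbed by `r`. -/
theorem equiv_of_normal_of_locallyConfluent (he : Equivalence e)
    (hcompat : ∀ a b c, e a b → r b c → r a c) (hwf : WellFounded (flip r))
    (hlc : ∀ a b c, r a b → r a c →
      ∃ b' c', ReflTransGen r b b' ∧ ReflTransGen r c c' ∧ e b' c')
    {a n n' : α} (hn : ReflTransGen r a n) (hn' : ReflTransGen r a n')
    (hnf : ∀ x, ¬ r n x) (hnf' : ∀ x, ¬ r n' x) : e n n' := by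
  induction a using hwf.induction generalizing n n' with
  | _ a ih =>
  rcases hn.cases_head with rfl | ⟨b, hab, hbn⟩
  · rcases hn'.cases_head with rfl | ⟨c, hac, -⟩
    · exact he.refl _
    · exact absurd hac (hnf c)
  rcases hn'.cases_head with rfl | ⟨c, hac, hcn'⟩
  · exact absurd hab (hnf' b)
  obtain ⟨b', c', hbb', hcc', hbc'⟩ := hlc _ _ _ hab hac
  obtain ⟨d, hb'd, hd⟩ := exists_normal_of_wellFounded hwf b'
  obtain ⟨d', hc'd', hd'd⟩ := hb'd.exists_of_equiv he hcompat (he.symm hbc')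
  have hd' : ∀ x, ¬ r d' x := fun x hx => hd x (hcompat _ _ _ (he.symm hd'd) hx)
  exact he.trans (ih b hab hbn (hbb'.trans hb'd) hnf hd)
    (he.trans (he.symm hd'd) (ih c hac (hcc'.trans hc'd') hcn' hd' hnf'))

end Newman

lemma Set.InjOn.exists_partialInv {α β : Type*} {f : α → β} {s : Set α} (h : s.InjOn f) :
    ∃ g : β → Option α, (∀ a ∈ s, g (f a) = some a) ∧ ∀ b ∉ f '' s, g b = none := by
  classical
  refine ⟨fun b => if hb : ∃ a ∈ s, f a = b then some hb.choose else none, fun a ha => ?_,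
    fun b hb => dif_neg hb⟩
  have hb : ∃ a' ∈ s, f a' = f a := ⟨a, ha, rfl⟩
  dsimp only
  rw [dif_pos hb, h hb.choose_spec.1 ha hb.choose_spec.2]

/-! ### Structural congruence as multisets of components -/

def Act.enc : Act → ℕ
  | .inp a => 2 * a
  | .out a => 2 * a + 1

lemma Act.enc_injective : Function.Injective Act.enc := by
  rintro (a | a) (b | b) h <;> simp only [Act.enc, Act.inp.injEq, Act.out.injEq] at h ⊢ <;> omega

namespace Proc

def preCode (η : Act) (m : Multiset ℕ) : ℕ := Nat.pair η.enc (Encodable.encode m)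

/-- The multiset of parallel components, each component `η.B` coded by `η` and (recursively)
the code of `B`; it decides `≡ₛ` (`sc_iff_code_eq`). -/
def code : Proc → Multiset ℕ
  | nil => 0
  | pre η P => {preCode η P.code}
  | par P Q => P.code + Q.code

@[simp] lemma code_nil : nil.code = 0 := rfl
@[simp] lemma code_pre (η : Act) (P : Proc) : (pre η P).code = {preCode η P.code} := rfl
@[simp] lemma code_par (P Q : Proc) : (par P Q).code = P.code + Q.code := rfl

@[simp] lemma size_nil : nil.size = 0 := rfl
@[simp] lemma size_pre (η : Act) (P : Proc) : (pre η P).size = 1 + P.size := rfl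
@[simp] lemma size_par (P Q : Proc) : (par P Q).size = P.size + Q.size := rfl

lemma preCode_inj {η η' : Act} {m m' : Multiset ℕ} :
    preCode η m = preCode η' m' ↔ η = η' ∧ m = m' := by
  simp [preCode, Nat.pair_eq_pair, Act.enc_injective.eq_iff]

@[simp] lemma code_pow (P : Proc) (n : ℕ) : (pow P n).code = n • P.code := by
  induction n with
  | zero => rfl
  | succ n ih => simp [pow, ih, succ_nsmul, add_comm]

@[simp] lemma size_pow (P : Proc) (n : ℕ) : (pow P n).size = n * P.size := by
  induction n with
  | zero => simp [pow]
  | succ n ih => simp [pow, ih, Nat.succ_mul, add_comm]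

end Proc

open Proc

lemma SC.code_eq {P Q : Proc} (h : P ≡ₛ Q) : P.code = Q.code := by
  induction h with
  | refl | comm | assoc | unit => simp [add_comm, add_assoc]
  | symm _ ih => exact ih.symm
  | trans _ _ ih₁ ih₂ => exact ih₁.trans ih₂
  | pre _ _ ih => simp [ih]
  | par _ _ ih₁ ih₂ => simp [ih₁, ih₂]

lemma SC.size_eq {P Q : Proc} (h : P ≡ₛ Q) : P.size = Q.size := by
  induction h with
  | refl | comm | assoc | unit => simp only [size_par, size_nil] <;> omega
  | symm _ ih => exact ih.symm
  | trans _ _ ih₁ ih₂ => exact ih₁.trans ih₂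
  | pre _ _ ih => simp [ih]
  | par _ _ ih₁ ih₂ => simp [ih₁, ih₂]

lemma SC.equivalence : Equivalence SC := ⟨SC.refl, SC.symm, SC.trans⟩

lemma sc_nil_of_code_eq_zero : ∀ {P : Proc}, P.code = 0 → P ≡ₛ .nil
  | .nil, _ => SC.refl _
  | .pre _ _, h => by simp at h
  | .par _ _, h => by
    rw [code_par, add_eq_zero] at h
    exact (SC.par (sc_nil_of_code_eq_zero h.1) (sc_nil_of_code_eq_zero h.2)).trans (SC.unit _)

lemma exists_sc_pre_par_of_mem {S : Proc} {c : ℕ} (hc : c ∈ S.code) :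
    ∃ η B W, S ≡ₛ .par (.pre η B) W ∧ c = preCode η B.code := by
  induction S with
  | nil => simp at hc
  | pre η B => exact ⟨η, B, .nil, (SC.unit _).symm, by simpa using hc⟩
  | par S₁ S₂ ih₁ ih₂ =>
    rcases Multiset.mem_add.1 hc with hc | hc
    · obtain ⟨η, B, W, h, rfl⟩ := ih₁ hc
      exact ⟨η, B, .par W S₂, (SC.par h (SC.refl _)).trans (SC.assoc _ _ _).symm, rfl⟩
    · obtain ⟨η, B, W, h, rfl⟩ := ih₂ hc
      refine ⟨η, B, .par S₁ W, ?_, rfl⟩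
      calc .par S₁ S₂ ≡ₛ .par S₁ (.par (.pre η B) W) := SC.par (SC.refl _) h
        _ ≡ₛ .par (.par S₁ (.pre η B)) W := SC.assoc _ _ _
        _ ≡ₛ .par (.par (.pre η B) S₁) W := SC.par (SC.comm _ _) (SC.refl _)
        _ ≡ₛ .par (.pre η B) (.par S₁ W) := (SC.assoc _ _ _).symm

theorem sc_of_code_eq {P Q : Proc} (h : P.code = Q.code) : P ≡ₛ Q := by
  induction hn : P.size using Nat.strong_induction_on generalizing P Q with
  | _ n ih =>
  rcases Multiset.empty_or_exists_mem P.code with h0 | ⟨c, hc⟩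
  · exact (sc_nil_of_code_eq_zero h0).trans (sc_nil_of_code_eq_zero (h ▸ h0)).symm
  obtain ⟨η, B, W, hP, rfl⟩ := exists_sc_pre_par_of_mem hc
  obtain ⟨η', B', W', hQ, hc'⟩ := exists_sc_pre_par_of_mem (h ▸ hc)
  obtain ⟨rfl, hB⟩ := preCode_inj.1 hc'
  have hW : W.code = W'.code := by
    simpa [hB] using hP.code_eq.symm.trans (h.trans hQ.code_eq)
  have hsize := hP.size_eq
  simp only [size_par, size_pre] at hsize
  calc P ≡ₛ .par (.pre η B) W := hP
    _ ≡ₛ .par (.pre η B') W' :=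
      SC.par (SC.pre η (ih _ (by omega) hB rfl)) (ih _ (by omega) hW rfl)
    _ ≡ₛ Q := hQ.symm

theorem sc_iff_code_eq {P Q : Proc} : P ≡ₛ Q ↔ P.code = Q.code :=
  ⟨SC.code_eq, sc_of_code_eq⟩

lemma sc_pre_iff {η η' : Act} {B B' : Proc} : .pre η B ≡ₛ .pre η' B' ↔ η = η' ∧ B ≡ₛ B' := by
  simp [sc_iff_code_eq, preCode_inj]

lemma preCode_mem_code_iff {η : Act} {B S : Proc} :
    preCode η B.code ∈ S.code ↔ ∃ W, S ≡ₛ .par (.pre η B) W := by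
  constructor
  · intro h
    obtain ⟨η', B', W, hS, hc⟩ := exists_sc_pre_par_of_mem h
    obtain ⟨rfl, hB⟩ := preCode_inj.1 hc
    exact ⟨W, hS.trans (SC.par (SC.pre η (sc_of_code_eq hB.symm)) (SC.refl W))⟩
  · rintro ⟨W, hS⟩
    simp [hS.code_eq]

lemma size_lt_of_preCode_mem {η : Act} {B S : Proc} (h : preCode η B.code ∈ S.code) :
    B.size < S.size := by
  obtain ⟨W, hS⟩ := preCode_mem_code_iff.1 h
  have := hS.size_eq
  simp only [size_par, size_pre] at this
  omega

lemma SC.par_cancel {X X' S S' : Proc} (h : .par X S ≡ₛ .par X' S') (hX : X ≡ₛ X') :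
    S ≡ₛ S' := by
  rw [sc_iff_code_eq, code_par, code_par, hX.code_eq] at h
  exact sc_of_code_eq (add_left_cancel h)

/-- Two different prefixed components of a process can be split off together. -/
lemma SC.exchange {η η' : Act} {B B' S S' : Proc}
    (h : .par (.pre η B) S ≡ₛ .par (.pre η' B') S') (hne : ¬ .pre η B ≡ₛ .pre η' B') :
    ∃ T, S ≡ₛ .par (.pre η' B') T ∧ S' ≡ₛ .par (.pre η B) T := by
  rw [sc_iff_code_eq] at h hne
  simp only [code_par, code_pre, Multiset.singleton_add] at h hne
  obtain ⟨hc, -⟩ | ⟨-, cs, hS, hS'⟩ := Multiset.cons_eq_cons.1 h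
  · exact absurd (by rw [hc]) hne
  obtain ⟨T, hT⟩ := preCode_mem_code_iff.1 (hS ▸ Multiset.mem_cons_self _ _)
  have hcs : cs = T.code := by
    simpa [hS, Multiset.singleton_add] using hT.code_eq
  exact ⟨T, hT, sc_of_code_eq (by simp [hS', hcs, Multiset.singleton_add])⟩

lemma SC.cases_par_pow {η η' : Act} {B B' R S : Proc} {k : ℕ}
    (h : .par (.pre η B) S ≡ₛ .par R (pow (.pre η' B') k)) :
    (∃ R₁, R ≡ₛ .par (.pre η B) R₁ ∧ S ≡ₛ .par R₁ (pow (.pre η' B') k)) ∨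
    (.pre η B ≡ₛ .pre η' B' ∧ ∃ j, k = j + 1 ∧ S ≡ₛ .par R (pow (.pre η' B') j)) := by
  have hmem : preCode η B.code ∈ (Proc.par R (pow (.pre η' B') k)).code := by
    simp [← h.code_eq]
  simp only [code_par, code_pow, code_pre] at hmem
  rcases Multiset.mem_add.1 hmem with hR | hX
  · obtain ⟨R₁, hR₁⟩ := preCode_mem_code_iff.1 hR
    refine .inl ⟨R₁, hR₁, (h.trans ?_).par_cancel (SC.refl _)⟩
    exact sc_of_code_eq (by simp [hR₁.code_eq])
  · rw [Multiset.nsmul_singleton, Multiset.mem_replicate] at hX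
    obtain ⟨hk, hX⟩ := hX
    obtain ⟨j, rfl⟩ := Nat.exists_eq_succ_of_ne_zero hk
    have hXX : .pre η B ≡ₛ .pre η' B' := sc_of_code_eq (by simp [hX])
    refine .inr ⟨hXX, j, rfl, (h.trans ?_).par_cancel hXX⟩
    exact sc_of_code_eq (by simp only [code_par, code_pre, code_pow, succ_nsmul]; abel)

/-! ### Termination -/

/-- A prefix weighs the size of its body; the distribution law `η.(P ‖ (η.P)^k) ⇝ (η.P)^{k+1}`
lowers the total weight by `k`. -/
def Proc.wgt : Proc → ℕ
  | .nil => 0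
  | .pre _ P => P.size + P.wgt
  | .par P Q => P.wgt + Q.wgt

lemma Proc.wgt_pow (P : Proc) (n : ℕ) : (pow P n).wgt = n * P.wgt := by
  induction n with
  | zero => simp [pow, wgt]
  | succ n ih => simp only [pow, wgt, ih, Nat.succ_mul, add_comm]

lemma SC.wgt_eq {P Q : Proc} (h : P ≡ₛ Q) : P.wgt = Q.wgt := by
  induction h with
  | refl | comm | assoc | unit => simp only [wgt] <;> omega
  | symm _ ih => exact ih.symm
  | trans _ _ ih₁ ih₂ => exact ih₁.trans ih₂
  | pre _ h ih => simp only [wgt, ih, h.size_eq]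
  | par _ _ ih₁ ih₂ => simp only [wgt, ih₁, ih₂]

lemma RW.size_eq {P Q : Proc} (h : RW P Q) : P.size = Q.size := by
  induction h with
  | head => simp only [size_pre, size_par, size_pow]; ring
  | pre _ _ ih | parL _ _ ih | parR _ _ ih => simp only [size_pre, size_par, ih]
  | congr h₁ _ h₂ ih => rw [h₁.size_eq, ih, h₂.size_eq]

lemma RW.wgt_lt {P Q : Proc} (h : RW P Q) : Q.wgt < P.wgt := by
  induction h with
  | head hk => simp only [wgt, size_par, size_pre, size_pow, wgt_pow]; nlinarith
  | pre _ h ih => simp only [wgt, h.size_eq]; omega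
  | parL _ _ ih | parR _ _ ih => simp only [wgt]; omega
  | congr h₁ _ h₂ ih => rwa [h₁.wgt_eq, ← h₂.wgt_eq]

lemma RW.wellFounded : WellFounded (flip RW) :=
  Subrelation.wf (fun h => RW.wgt_lt h) (measure Proc.wgt).wf

lemma RW.size_pos {P Q : Proc} (h : RW P Q) : 0 < P.size := by
  induction h with
  | head => simp only [size_pre]; omega
  | pre => simp only [size_pre]; omega
  | parL _ _ ih | parR _ _ ih => simp only [size_par]; omega
  | congr h₁ _ _ ih => rwa [h₁.size_eq]

lemma RW.sc_left {P P' Q : Proc} (h : P ≡ₛ P') (hr : RW P' Q) : RW P Q :=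
  RW.congr h hr (SC.refl _)

lemma RW.rws {P Q : Proc} (h : RW P Q) : Rws P Q := .single h

lemma Rws.refl {P : Proc} : Rws P P := ReflTransGen.refl

lemma Rws.pre (η : Act) {B B' : Proc} (h : Rws B B') : Rws (.pre η B) (.pre η B') :=
  ReflTransGen.lift (Proc.pre η) (fun _ _ => RW.pre η) _ _ h

lemma Rws.par {P P' Q Q' : Proc} (hP : Rws P P') (hQ : Rws Q Q') :
    Rws (.par P Q) (.par P' Q') :=
  ReflTransGen.trans (ReflTransGen.lift (p := RW) (Proc.par · Q) (fun _ _ => RW.parL Q) _ _ hP)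
    (ReflTransGen.lift (Proc.par P') (fun _ _ => RW.parR P') _ _ hQ)

lemma Rws.pow {P P' : Proc} (h : Rws P P') (n : ℕ) : Rws (pow P n) (pow P' n) := by
  induction n with
  | zero => exact .refl
  | succ n ih => exact h.par ih

lemma Rws.sc_left_of_rw {P P₀ P₁ Q : Proc} (h : P ≡ₛ P₀) (hr : Rws P₀ P₁) (hs : RW P₁ Q) :
    Rws P Q := by
  obtain ⟨P₂, h₀, h₂⟩ := TransGen.head'_iff.1 (TransGen.tail' hr hs)
  exact .head (h₀.sc_left h) h₂

/-! ### Local confluence -/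

def JoinSC (P Q : Proc) : Prop := ∃ P' Q', Rws P P' ∧ Rws Q Q' ∧ P' ≡ₛ Q'

namespace JoinSC

variable {P Q P₀ Q₀ S S' : Proc}

lemma symm (h : JoinSC P Q) : JoinSC Q P :=
  let ⟨P', Q', hP, hQ, hPQ⟩ := h
  ⟨Q', P', hQ, hP, hPQ.symm⟩

lemma of_sc (hP : P ≡ₛ P₀) (hQ : Q ≡ₛ Q₀) (h : JoinSC P₀ Q₀) : JoinSC P Q := by
  obtain ⟨P₁, Q₁, hP₁, hQ₁, hPQ⟩ := h
  obtain ⟨P₂, hP₂, h₂⟩ := hP₁.exists_of_equiv SC.equivalence (fun _ _ _ => RW.sc_left) hP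
  obtain ⟨Q₂, hQ₂, h₂'⟩ := hQ₁.exists_of_equiv SC.equivalence (fun _ _ _ => RW.sc_left) hQ
  exact ⟨P₂, Q₂, hP₂, hQ₂, h₂.trans (hPQ.trans h₂'.symm)⟩

lemma par (h : JoinSC P Q) (hS : S ≡ₛ S') : JoinSC (.par P S) (.par Q S') :=
  let ⟨_, _, hP, hQ, hPQ⟩ := h
  ⟨_, _, hP.par .refl, hQ.par .refl, SC.par hPQ hS⟩

lemma pre (η : Act) (h : JoinSC P Q) : JoinSC (.pre η P) (.pre η Q) :=
  let ⟨_, _, hP, hQ, hPQ⟩ := h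
  ⟨_, _, hP.pre η, hQ.pre η, SC.pre η hPQ⟩

end JoinSC

/-- A prefixed process rewrites by the distribution law at its root, or inside one parallel
component of its body. Every rewrite step is such a step inside a parallel context
(`RW.exists_prefixRW`), in a form that exposes the overlaps of two steps. -/
inductive PrefixRW : Proc → Proc → Prop
  | head {η : Act} {R : Proc} {k : ℕ} (hk : 1 ≤ k) :
      PrefixRW (.pre η (.par R (pow (.pre η R) k))) (pow (.pre η R) (k + 1))
  | body (η : Act) {B B' X Y S : Proc} :
      PrefixRW X Y → B ≡ₛ .par X S → B' ≡ₛ .par Y S → PrefixRW (.pre η B) (.pre η B')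

namespace PrefixRW

variable {X Y : Proc}

lemma exists_eq_pre (h : PrefixRW X Y) : ∃ η B, X = .pre η B := by
  cases h <;> exact ⟨_, _, rfl⟩

lemma rw (h : PrefixRW X Y) : RW X Y := by
  induction h with
  | head hk => exact RW.head hk
  | body η _ hB hB' ih => exact RW.pre η (RW.congr hB (RW.parL _ ih) hB'.symm)

end PrefixRW

lemma RW.exists_prefixRW {P Q : Proc} (h : RW P Q) :
    ∃ X Y S, PrefixRW X Y ∧ P ≡ₛ .par X S ∧ Q ≡ₛ .par Y S := by
  induction h with
  | head hk => exact ⟨_, _, .nil, .head hk, (SC.unit _).symm, (SC.unit _).symm⟩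
  | pre η _ ih =>
    obtain ⟨X, Y, S, hXY, hP, hQ⟩ := ih
    exact ⟨_, _, .nil, .body η hXY hP hQ, (SC.unit _).symm, (SC.unit _).symm⟩
  | parL R _ ih =>
    obtain ⟨X, Y, S, hXY, hP, hQ⟩ := ih
    exact ⟨X, Y, .par S R, hXY, sc_of_code_eq (by simp [hP.code_eq, add_assoc]),
      sc_of_code_eq (by simp [hQ.code_eq, add_assoc])⟩
  | parR R _ ih =>
    obtain ⟨X, Y, S, hXY, hP, hQ⟩ := ih
    exact ⟨X, Y, .par R S, hXY, sc_of_code_eq (by simp only [code_par, hP.code_eq]; abel),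
      sc_of_code_eq (by simp only [code_par, hQ.code_eq]; abel)⟩
  | congr h₁ _ h₂ ih =>
    obtain ⟨X, Y, S, hXY, hP, hQ⟩ := ih
    exact ⟨X, Y, S, hXY, h₁.trans hP, h₂.symm.trans hQ⟩

/-- Steps in different components commute. -/
lemma JoinSC.par_of_prefixRW {X₁ X₂ Y₁ Y₂ S₁ S₂ : Proc} (h₁ : PrefixRW X₁ Y₁)
    (h₂ : PrefixRW X₂ Y₂) (h : .par X₁ S₁ ≡ₛ .par X₂ S₂) (hsame : X₁ ≡ₛ X₂ → JoinSC Y₁ Y₂) :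
    JoinSC (.par Y₁ S₁) (.par Y₂ S₂) := by
  by_cases hX : X₁ ≡ₛ X₂
  · exact (hsame hX).par (h.par_cancel hX)
  obtain ⟨η₁, B₁, rfl⟩ := h₁.exists_eq_pre
  obtain ⟨η₂, B₂, rfl⟩ := h₂.exists_eq_pre
  obtain ⟨T, hS₁, hS₂⟩ := h.exchange hX
  refine ⟨.par Y₁ (.par Y₂ T), .par Y₂ (.par Y₁ T), .single ?_, .single ?_,
    sc_of_code_eq (by simp only [code_par]; abel)⟩
  · exact RW.sc_left (SC.par (SC.refl _) hS₁) (RW.parR _ (RW.parL _ h₂.rw))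
  · exact RW.sc_left (SC.par (SC.refl _) hS₂) (RW.parR _ (RW.parL _ h₁.rw))

lemma size_lt_of_code_redex_eq {η : Act} {R R' : Proc} {k k' : ℕ} (hk' : 1 ≤ k')
    (hRR : R.code ≠ R'.code)
    (h : (Proc.par R (pow (.pre η R) k)).code = (Proc.par R' (pow (.pre η R') k')).code) :
    R'.size < R.size := by
  refine size_lt_of_preCode_mem (η := η) ?_
  have hmem : preCode η R'.code ∈ (Proc.par R (pow (.pre η R) k)).code := by
    rw [h]
    simp only [code_par, code_pow, code_pre, Multiset.mem_add, Multiset.nsmul_singleton,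
      Multiset.mem_replicate]
    exact .inr ⟨by omega, trivial⟩
  simp only [code_par, code_pow, code_pre, Multiset.mem_add, Multiset.nsmul_singleton,
    Multiset.mem_replicate, preCode_inj] at hmem
  exact hmem.resolve_right fun h => hRR h.2.2.symm

/-- The root redex of `η.(R ‖ (η.R)^k)` is unique: if `η.R'` were a different maximal
component, each of `R`, `R'` would strictly contain the other. -/
lemma sc_pow_of_sc_redex {η η' : Act} {R R' : Proc} {k k' : ℕ} (hk : 1 ≤ k) (hk' : 1 ≤ k')
    (h : .pre η (.par R (pow (.pre η R) k)) ≡ₛ .pre η' (.par R' (pow (.pre η' R') k'))) :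
    pow (.pre η R) (k + 1) ≡ₛ pow (.pre η' R') (k' + 1) := by
  obtain ⟨rfl, h⟩ := sc_pre_iff.1 h
  by_cases hRR : R.code = R'.code
  · have hkk := congrArg Multiset.card h.code_eq
    simp only [code_par, hRR, code_pow, code_pre, Multiset.card_add, Multiset.card_nsmul,
      Multiset.card_singleton, mul_one, Nat.add_left_cancel_iff] at hkk
    exact sc_of_code_eq (by simp [hRR, hkk])
  · have := size_lt_of_code_redex_eq hk' hRR h.code_eq
    have := size_lt_of_code_redex_eq hk (Ne.symm hRR) h.code_eq.symm
    omega

lemma rws_of_sc_redex {η : Act} {B R R' C C' : Proc} {k : ℕ} (hk : 1 ≤ k) (hB : B ≡ₛ .par R C)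
    (hR : Rws R R') (hC : Rws C C') (hC' : C' ≡ₛ pow (.pre η R') k) :
    Rws (.pre η B) (pow (.pre η R') (k + 1)) :=
  Rws.sc_left_of_rw (SC.pre η hB) ((hR.par hC).pre η)
    (RW.sc_left (SC.pre η (SC.par (SC.refl _) hC')) (RW.head hk))

lemma JoinSC.redex_of_rw_body {η : Act} {R R' B' : Proc} {k : ℕ} (hk : 1 ≤ k) (hR : RW R R')
    (hB' : B' ≡ₛ .par R' (pow (.pre η R) k)) :
    JoinSC (pow (.pre η R) (k + 1)) (.pre η B') :=
  ⟨_, _, (RW.pre η hR).rws.pow _,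
    rws_of_sc_redex hk hB' .refl ((RW.pre η hR).rws.pow k) (SC.refl _), SC.refl _⟩

lemma JoinSC.redex_of_rw_copy {η : Act} {R R₂ B' : Proc} {j : ℕ} (hR : RW R R₂)
    (hB' : B' ≡ₛ .par R (.par (.pre η R₂) (pow (.pre η R) j))) :
    JoinSC (pow (.pre η R) (j + 1 + 1)) (.pre η B') :=
  ⟨_, _, (RW.pre η hR).rws.pow _, rws_of_sc_redex (by omega) hB' hR.rws
    (Rws.refl.par ((RW.pre η hR).rws.pow j)) (SC.refl _), SC.refl _⟩

/-- Both sides reach `(η.R₁)^{(j₁+1)(j+2)}`. -/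
lemma JoinSC.redex_of_redex_copy {η : Act} {R R₁ B' : Proc} {j j₁ : ℕ} (hj₁ : 1 ≤ j₁)
    (hR : R ≡ₛ .par R₁ (pow (.pre η R₁) j₁))
    (hB' : B' ≡ₛ .par (pow (.pre η R₁) (j₁ + 1)) (.par R (pow (.pre η R) j))) :
    JoinSC (pow (.pre η R) (j + 1 + 1)) (.pre η B') := by
  have hRed : RW (.pre η R) (pow (.pre η R₁) (j₁ + 1)) := RW.sc_left (SC.pre η hR) (RW.head hj₁)
  refine ⟨_, _, hRed.rws.pow _,
    rws_of_sc_redex (k := j₁ + (j₁ + 1) * (j + 1)) (by nlinarith) (R := R₁)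
      (C := .par (pow (.pre η R₁) j₁) (.par (pow (.pre η R₁) (j₁ + 1)) (pow (.pre η R) j)))
      ?_ .refl (Rws.refl.par (Rws.refl.par (hRed.rws.pow j))) ?_, sc_of_code_eq ?_⟩
  · exact sc_of_code_eq (by simp only [hB'.code_eq, code_par, code_pow, code_pre, hR.code_eq]; abel)
  · exact sc_of_code_eq (by simp only [code_par, code_pow, smul_smul, ← add_smul]; ring_nf)
  · simp only [code_pow, smul_smul]
    ring_nf

/-- The root redex of `η.(R ‖ (η.R)^k)` against a step inside its body, which rewrites `R` or a
copy of `η.R`. -/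
lemma JoinSC.redex_body {η : Act} {R Z W S B' : Proc} {k : ℕ} (hk : 1 ≤ k) (hZ : PrefixRW Z W)
    (hB : .par R (pow (.pre η R) k) ≡ₛ .par Z S) (hB' : B' ≡ₛ .par W S) :
    JoinSC (pow (.pre η R) (k + 1)) (.pre η B') := by
  obtain ⟨η₀, B₀, rfl⟩ := hZ.exists_eq_pre
  rcases hB.symm.cases_par_pow with ⟨R₁, hR, hS⟩ | ⟨hZR, j, rfl, hS⟩
  · exact JoinSC.redex_of_rw_body hk (RW.sc_left hR (RW.parL _ hZ.rw))
      (hB'.trans (sc_of_code_eq (by simp [hS.code_eq, add_assoc])))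
  obtain ⟨rfl, hB₀R⟩ := sc_pre_iff.1 hZR
  cases hZ with
  | head hj₁ => exact JoinSC.redex_of_redex_copy hj₁ hB₀R.symm (hB'.trans (SC.par (SC.refl _) hS))
  | body _ hZ₂ hB₂ hB₂' =>
    exact JoinSC.redex_of_rw_copy (RW.congr (hB₀R.symm.trans hB₂) (RW.parL _ hZ₂.rw) hB₂'.symm)
      (hB'.trans (sc_of_code_eq (by simp [hS.code_eq])))

theorem PrefixRW.joinSC {X Y X' Y' : Proc} (h : PrefixRW X Y) (h' : PrefixRW X' Y')
    (hX : X ≡ₛ X') : JoinSC Y Y' := by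
  induction h generalizing X' Y' with
  | head hk =>
    cases h' with
    | head hk' => exact ⟨_, _, .refl, .refl, sc_pow_of_sc_redex hk hk' hX⟩
    | body _ hZ hB hB' =>
      obtain ⟨rfl, hBB⟩ := sc_pre_iff.1 hX
      exact JoinSC.redex_body hk hZ (hBB.trans hB) hB'
  | body η hZ hB hB' ih =>
    cases h' with
    | head hk' =>
      obtain ⟨rfl, hBB⟩ := sc_pre_iff.1 hX.symm
      exact (JoinSC.redex_body hk' hZ (hBB.trans hB) hB').symm
    | body _ hZ' hB₂ hB₂' =>
      obtain ⟨rfl, hBB⟩ := sc_pre_iff.1 hX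
      have hbody := JoinSC.par_of_prefixRW hZ hZ' (hB.symm.trans (hBB.trans hB₂)) (ih hZ')
      exact (hbody.of_sc hB' hB₂').pre η

theorem RW.joinSC {P Q Q' : Proc} (h : RW P Q) (h' : RW P Q') : JoinSC Q Q' := by
  obtain ⟨X, Y, S, hXY, hP, hQ⟩ := h.exists_prefixRW
  obtain ⟨X', Y', S', hXY', hP', hQ'⟩ := h'.exists_prefixRW
  exact (JoinSC.par_of_prefixRW hXY hXY' (hP.symm.trans hP') (hXY.joinSC hXY')).of_sc hQ hQ'

theorem sc_of_rws_of_nf {P A B : Proc} (hA : Rws P A) (hB : Rws P B) (nfA : NF A) (nfB : NF B) :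
    A ≡ₛ B :=
  equiv_of_normal_of_locallyConfluent (r := RW) SC.equivalence (fun _ _ _ => RW.sc_left)
    RW.wellFounded (fun _ _ _ => RW.joinSC) hA hB (fun x hx => nfA ⟨x, hx⟩) (fun x hx => nfB ⟨x, hx⟩)

/-! ### Terms and their instances -/

section Instantiation

variable (σ : ℕ → Proc)

lemma inst_tpow (M : Tm) (n : ℕ) : inst σ (tpow M n) = pow (inst σ M) n := by
  induction n with
  | zero => rfl
  | succ n ih => simp only [tpow, pow, inst, ih]

lemma TmSC.sc_inst {M N : Tm} (h : TmSC M N) : inst σ M ≡ₛ inst σ N := by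
  induction h with
  | refl => exact SC.refl _
  | symm _ ih => exact ih.symm
  | trans _ _ ih₁ ih₂ => exact ih₁.trans ih₂
  | comm => exact SC.comm _ _
  | assoc => exact SC.assoc _ _ _
  | unit => exact SC.unit _
  | pre η _ ih => exact SC.pre η ih
  | par _ _ ih₁ ih₂ => exact SC.par ih₁ ih₂

lemma TmRW.rw_inst {M N : Tm} (h : TmRW M N) : RW (inst σ M) (inst σ N) := by
  induction h with
  | head hk => simpa only [inst, inst_tpow] using RW.head hk
  | pre η _ ih => exact RW.pre η ih
  | parL _ _ ih => exact RW.parL _ ih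
  | parR _ _ ih => exact RW.parR _ ih
  | congr h₁ _ h₂ ih => exact RW.congr (h₁.sc_inst σ) ih (h₂.sc_inst σ)

lemma TmRws.rws_inst {M N : Tm} (h : TmRws M N) : Rws (inst σ M) (inst σ N) :=
  ReflTransGen.lift (inst σ) (fun _ _ h => h.rw_inst σ) _ _ h

end Instantiation

lemma TmSC.vars_names_eq {M N : Tm} (h : TmSC M N) :
    tmVars M = tmVars N ∧ tmNames M = tmNames N := by
  induction h with
  | refl => exact ⟨rfl, rfl⟩
  | symm _ ih => exact ⟨ih.1.symm, ih.2.symm⟩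
  | trans _ _ ih₁ ih₂ => exact ⟨ih₁.1.trans ih₂.1, ih₁.2.trans ih₂.2⟩
  | comm => simp only [tmVars, tmNames, Set.union_comm, and_self]
  | assoc => simp only [tmVars, tmNames, Set.union_assoc, and_self]
  | unit => simp only [tmVars, tmNames, Set.union_empty, and_self]
  | pre η _ ih => simp only [tmVars, tmNames, ih, and_self]
  | par _ _ ih₁ ih₂ => simp only [tmVars, tmNames, ih₁, ih₂, and_self]

lemma tpow_vars_names_subset (M : Tm) (n : ℕ) :
    tmVars (tpow M n) ⊆ tmVars M ∧ tmNames (tpow M n) ⊆ tmNames M := by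
  induction n with
  | zero => simp [tpow, tmVars, tmNames]
  | succ n ih => simpa [tpow, tmVars, tmNames] using ih

lemma TmRW.vars_names_subset {M N : Tm} (h : TmRW M N) :
    tmVars N ⊆ tmVars M ∧ tmNames N ⊆ tmNames M := by
  induction h with
  | @head η M k _ =>
    have := tpow_vars_names_subset (.pre η M) (k + 1)
    simp only [tmVars, tmNames] at this ⊢
    exact ⟨this.1.trans Set.subset_union_left,
      this.2.trans (Set.union_subset_union_right _ Set.subset_union_left)⟩
  | pre η _ ih => simpa only [tmVars, tmNames] using ⟨ih.1, Set.union_subset_union_right _ ih.2⟩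
  | parL _ _ ih => simpa only [tmVars, tmNames] using
      ⟨Set.union_subset_union_left _ ih.1, Set.union_subset_union_left _ ih.2⟩
  | parR _ _ ih => simpa only [tmVars, tmNames] using
      ⟨Set.union_subset_union_right _ ih.1, Set.union_subset_union_right _ ih.2⟩
  | congr h₁ _ h₂ ih =>
    rw [h₁.vars_names_eq.1, h₁.vars_names_eq.2, ← h₂.vars_names_eq.1, ← h₂.vars_names_eq.2]
    exact ih

lemma TmRws.vars_names_subset {M N : Tm} (h : TmRws M N) :
    tmVars N ⊆ tmVars M ∧ tmNames N ⊆ tmNames M := by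
  induction h with
  | refl => exact ⟨subset_rfl, subset_rfl⟩
  | tail _ h ih => exact ⟨h.vars_names_subset.1.trans ih.1, h.vars_names_subset.2.trans ih.2⟩

/-! ### Reading processes back as terms -/

section Readback

variable (v : ℕ → Option ℕ)

def readback : Proc → Tm
  | .nil => .nil
  | .pre η B =>
    match v η.name with
    | some i => .var i
    | none => .pre η (readback B)
  | .par P Q => .par (readback P) (readback Q)

def DecodedLeaves : Proc → Prop
  | .nil => True
  | .pre η B => ((v η.name).isSome → B.size = 0) ∧ DecodedLeaves B
  | .par P Q => DecodedLeaves P ∧ DecodedLeaves Q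

variable {v}

lemma readback_pow (P : Proc) (n : ℕ) : readback v (pow P n) = tpow (readback v P) n := by
  induction n with
  | zero => rfl
  | succ n ih => simp only [pow, tpow, readback, ih]

lemma SC.tmSC_readback {P Q : Proc} (h : P ≡ₛ Q) : TmSC (readback v P) (readback v Q) := by
  induction h with
  | refl => exact TmSC.refl _
  | symm _ ih => exact ih.symm
  | trans _ _ ih₁ ih₂ => exact ih₁.trans ih₂
  | comm => exact TmSC.comm _ _
  | assoc => exact TmSC.assoc _ _ _
  | unit => exact TmSC.unit _
  | @pre _ _ η _ ih =>
    simp only [readback]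
    split
    · exact TmSC.refl _
    · exact TmSC.pre η ih
  | par _ _ ih₁ ih₂ => exact TmSC.par ih₁ ih₂

lemma SC.decodedLeaves_iff {P Q : Proc} (h : P ≡ₛ Q) : DecodedLeaves v P ↔ DecodedLeaves v Q := by
  induction h with
  | refl => rfl
  | symm _ ih => exact ih.symm
  | trans _ _ ih₁ ih₂ => exact ih₁.trans ih₂
  | comm => exact and_comm
  | assoc => exact and_assoc.symm
  | unit => simp only [DecodedLeaves, and_true]
  | pre η h ih => simp only [DecodedLeaves, h.size_eq, ih]
  | par _ _ ih₁ ih₂ => simp only [DecodedLeaves, ih₁, ih₂]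

/-- Decoded prefixes are leaves, so no redex involves them. -/
lemma RW.tmRW_readback {P Q : Proc} (hP : DecodedLeaves v P) (h : RW P Q) :
    TmRW (readback v P) (readback v Q) := by
  induction h with
  | @head η R k hk =>
    have hη : v η.name = none := by
      by_contra hη
      have := hP.1 (Option.ne_none_iff_isSome.1 hη)
      simp only [size_par, size_pow, size_pre] at this
      nlinarith
    simpa only [readback, readback_pow, hη] using TmRW.head hk
  | @pre _ _ η h ih =>
    cases hη : v η.name with
    | none => simpa only [readback, hη] using TmRW.pre η (ih hP.2)
    | some _ => exact absurd (hP.1 (by simp [hη])) h.size_pos.ne'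
  | parL _ _ ih => exact TmRW.parL _ (ih hP.1)
  | parR _ _ ih => exact TmRW.parR _ (ih hP.2)
  | congr h₁ _ h₂ ih =>
    exact TmRW.congr h₁.tmSC_readback (ih (h₁.decodedLeaves_iff.1 hP)) h₂.tmSC_readback

variable {σ : ℕ → Proc} {N : Tm}

lemma readback_inst (hvar : ∀ i ∈ tmVars N, readback v (σ i) = .var i)
    (hname : ∀ n ∈ tmNames N, v n = none) : readback v (inst σ N) = N := by
  induction N with
  | nil => rfl
  | pre η M ih =>
    simp only [tmNames, tmVars, Set.mem_union, Set.mem_singleton_iff] at hvar hname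
    simp only [inst, readback, hname _ (.inl rfl), ih hvar fun n hn => hname n (.inr hn)]
  | par M M' ih ih' =>
    simp only [tmNames, tmVars, Set.mem_union] at hvar hname
    simp only [inst, readback, ih (fun i hi => hvar i (.inl hi)) (fun n hn => hname n (.inl hn)),
      ih' (fun i hi => hvar i (.inr hi)) (fun n hn => hname n (.inr hn))]
  | var i => exact hvar i rfl

lemma decodedLeaves_inst (hvar : ∀ i ∈ tmVars N, DecodedLeaves v (σ i))
    (hname : ∀ n ∈ tmNames N, v n = none) : DecodedLeaves v (inst σ N) := by
  induction N with
  | nil => trivial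
  | pre η M ih =>
    simp only [tmNames, tmVars, Set.mem_union, Set.mem_singleton_iff] at hvar hname
    simp only [inst, DecodedLeaves, hname _ (.inl rfl), Option.isSome_none]
    exact ⟨nofun, ih hvar fun n hn => hname n (.inr hn)⟩
  | par M M' ih ih' =>
    simp only [tmNames, tmVars, Set.mem_union] at hvar hname
    exact ⟨ih (fun i hi => hvar i (.inl hi)) (fun n hn => hname n (.inl hn)),
      ih' (fun i hi => hvar i (.inr hi)) (fun n hn => hname n (.inr hn))⟩
  | var i => exact hvar i rfl

theorem nf_inst_of_tmNF (hN : TmNF N) (hvar : ∀ i ∈ tmVars N, readback v (σ i) = .var i)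
    (hleaf : ∀ i ∈ tmVars N, DecodedLeaves v (σ i)) (hname : ∀ n ∈ tmNames N, v n = none) :
    NF (inst σ N) := by
  rintro ⟨Q, hQ⟩
  have := hQ.tmRW_readback (decodedLeaves_inst hleaf hname)
  rw [readback_inst hvar hname] at this
  exact hN ⟨_, this⟩

end Readback

/-- substituting distinct fresh names `aᵢ.0` for the
    variables commutes with normalisation:
    `⌊M{aᵢ.0/Xᵢ}⌋ ≡ ⌊M⌋{aᵢ.0/Xᵢ}`. -/
theorem norm_subst_fresh (M : Tm) (a : ℕ → ℕ)
    (hinj : ∀ i j, i ∈ tmVars M → j ∈ tmVars M → a i = a j → i = j)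
    (hfresh : ∀ i, i ∈ tmVars M → a i ∉ tmNames M)
    (σ : ℕ → Proc) (hσ : ∀ i, σ i = .pre (.inp (a i)) .nil)
    (N : Tm) (hMN : TmRws M N) (hN : TmNF N)
    (A : Proc) (hA : Rws (inst σ M) A) (hAnf : NF A) :
    SC A (inst σ N) := by
  obtain ⟨v, hvar, hname⟩ := Set.InjOn.exists_partialInv fun i hi j hj h => hinj i j hi hj h
  obtain ⟨hvarsN, hnamesN⟩ := hMN.vars_names_subset
  refine sc_of_rws_of_nf hA (hMN.rws_inst σ) hAnf (nf_inst_of_tmNF (v := v) hN ?_ ?_ ?_)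
  · intro i hi
    simp [hσ, readback, Act.name, hvar i (hvarsN hi)]
  · intro i _
    simp [hσ, DecodedLeaves]
  · refine fun n hn => hname n ?_
    rintro ⟨i, hi, rfl⟩
    exact hfresh i hi (hnamesN hn)
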